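/- arXiv:0910.1570 — 2 statements merged into one kernel-verified Lean document; each statement's English description precedes it below -/
import Mathlib

section
/- Under the assumptions ν₁ F(v) ≤ σ(v,v') ≤ ν₂ F(v) with ∫ F = 1 and L(F) = 0, for any f ∈ L²_{F^{-1}}(ℝ^N) with ⟨f⟩ = ∫ f dv, one has ∫ L(f)(f/F) dv ≤ -ν₁ ∫ |f - ⟨f⟩ F|² / F dv. -/
open MeasureTheory Real Set Filter

/-! With `h = f / F`, the conservation law `L(F) = 0` turns `∫ L(f) (f / F)` into
`-(1/2) ∫∫ σ(v,v') F(v') (h(v') - h(v))²`. This Dirichlet form is monotone in the kernel, so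
`σ(v,v') ≥ ν₁ F(v)` bounds it below by the Dirichlet form of the relaxation kernel `ν₁ F(v)`, which
is `2 ν₁` times the variance of `h` under `F dv`, that is `2 ν₁ ∫ |f - ⟨f⟩ F|² / F`. -/

namespace LinearCollision

variable {α : Type*} [MeasurableSpace α] {μ : Measure α}

noncomputable def collisionOp (μ : Measure α) (σ : α → α → ℝ) (w : α → ℝ) (v : α) : ℝ :=
  ∫ v', σ v v' * w v' - σ v' v * w v ∂μ

noncomputable def dirichletForm (μ : Measure α) (σ : α → α → ℝ) (F h : α → ℝ) : ℝ :=
  ∫ p, σ p.1 p.2 * F p.2 * (h p.2 - h p.1) ^ 2 ∂μ.prod μ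

theorem integrable_of_integrable_sq_div {f F : α → ℝ} (hF : Integrable F μ) (hF₀ : ∀ v, 0 < F v)
    (hf : AEStronglyMeasurable f μ) (hf₂ : Integrable (fun v => f v ^ 2 / F v) μ) :
    Integrable f μ := by
  refine ((hf₂.add hF).div_const 2).mono' hf (ae_of_all _ fun v => ?_)
  have hFv := hF₀ v
  have hsq : f v ^ 2 / F v * F v = f v ^ 2 := div_mul_cancel₀ _ hFv.ne'
  rw [Real.norm_eq_abs, Pi.add_apply, le_div_iff₀ two_pos]
  -- AM-GM: `2 |f| ≤ f² / F + F`
  nlinarith [sq_nonneg (|f v| - F v), sq_abs (f v), div_nonneg (sq_nonneg (f v)) hFv.le]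

theorem integral_sq_sub_integral_mul_div {f F : α → ℝ} (hF : Integrable F μ)
    (hF₀ : ∀ v, F v ≠ 0) (hF₁ : ∫ v, F v ∂μ = 1) (hf : Integrable f μ)
    (hf₂ : Integrable (fun v => f v ^ 2 / F v) μ) :
    ∫ v, (f v - (∫ v', f v' ∂μ) * F v) ^ 2 / F v ∂μ
      = ∫ v, f v ^ 2 / F v ∂μ - (∫ v, f v ∂μ) ^ 2 := by
  set c := ∫ v, f v ∂μ
  have hexpand : ∀ v, (f v - c * F v) ^ 2 / F v = f v ^ 2 / F v - 2 * c * f v + c ^ 2 * F v := by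
    intro v
    field_simp [hF₀ v]
    ring
  simp_rw [hexpand]
  have hlin : Integrable (fun v => f v ^ 2 / F v - 2 * c * f v) μ := hf₂.sub (hf.const_mul _)
  rw [integral_add hlin (hF.const_mul _), integral_sub hf₂ (hf.const_mul _),
    integral_const_mul, integral_const_mul, hF₁]
  ring

variable {σ : α → α → ℝ} {F : α → ℝ} {C : ℝ}

theorem integrable_kernel_mul_prod (hσ : AEStronglyMeasurable (Function.uncurry σ) (μ.prod μ))
    (hσF : ∀ v v', |σ v v'| ≤ C * F v) {u w : α → ℝ} (hu : AEStronglyMeasurable u μ)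
    (hFu : Integrable (fun v => F v * u v) μ) (hw : Integrable w μ) :
    Integrable (fun p : α × α => σ p.1 p.2 * (u p.1 * w p.2)) (μ.prod μ) := by
  refine ((hFu.norm.mul_prod hw.norm).const_mul |C|).mono'
    (hσ.mul (hu.comp_fst.mul hw.1.comp_snd)) (ae_of_all _ fun p => ?_)
  have hσp : |σ p.1 p.2| ≤ |C| * |F p.1| :=
    (hσF p.1 p.2).trans ((le_abs_self _).trans (abs_mul C (F p.1)).le)
  simp only [Real.norm_eq_abs, abs_mul]
  calc |σ p.1 p.2| * (|u p.1| * |w p.2|) ≤ |C| * |F p.1| * (|u p.1| * |w p.2|) := by gcongr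
    _ = |C| * (|F p.1| * |u p.1| * |w p.2|) := by ring

theorem integrable_kernel_mul_snd (hσ : AEStronglyMeasurable (Function.uncurry σ) (μ.prod μ))
    (hσF : ∀ v v', |σ v v'| ≤ C * F v) (hF : Integrable F μ) {w : α → ℝ} (hw : Integrable w μ) :
    Integrable (fun p : α × α => σ p.1 p.2 * w p.2) (μ.prod μ) := by
  simpa using integrable_kernel_mul_prod hσ hσF (u := fun _ => 1) aestronglyMeasurable_const
    (by simpa using hF) hw

theorem integrable_dirichletForm_integrand
    (hσ : AEStronglyMeasurable (Function.uncurry σ) (μ.prod μ))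
    (hσF : ∀ v v', |σ v v'| ≤ C * F v) (hF : Integrable F μ) {h : α → ℝ}
    (hh : AEStronglyMeasurable h μ) (hFh : Integrable (fun v => F v * h v) μ)
    (hFh2 : Integrable (fun v => F v * h v ^ 2) μ) :
    Integrable (fun p : α × α => σ p.1 p.2 * F p.2 * (h p.2 - h p.1) ^ 2) (μ.prod μ) := by
  have hX := integrable_kernel_mul_prod hσ hσF hh hFh hFh
  have hY := integrable_kernel_mul_snd hσ hσF hF hFh2
  have hZ := integrable_kernel_mul_prod hσ hσF (u := fun v => h v ^ 2) (hh.pow 2) hFh2 hF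
  refine ((hY.sub (hX.const_mul 2)).add hZ).congr (ae_of_all _ fun p => ?_)
  simp only [Pi.add_apply, Pi.sub_apply]
  ring

theorem dirichletForm_mono {σ₁ σ₂ : α → α → ℝ} {C₁ C₂ : ℝ}
    (hσ₁ : AEStronglyMeasurable (Function.uncurry σ₁) (μ.prod μ))
    (hσ₁F : ∀ v v', |σ₁ v v'| ≤ C₁ * F v)
    (hσ₂ : AEStronglyMeasurable (Function.uncurry σ₂) (μ.prod μ))
    (hσ₂F : ∀ v v', |σ₂ v v'| ≤ C₂ * F v) (hσ₁₂ : ∀ v v', σ₁ v v' ≤ σ₂ v v')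
    (hF₀ : ∀ v, 0 ≤ F v) (hF : Integrable F μ) {h : α → ℝ} (hh : AEStronglyMeasurable h μ)
    (hFh : Integrable (fun v => F v * h v) μ) (hFh2 : Integrable (fun v => F v * h v ^ 2) μ) :
    dirichletForm μ σ₁ F h ≤ dirichletForm μ σ₂ F h :=
  integral_mono (integrable_dirichletForm_integrand hσ₁ hσ₁F hF hh hFh hFh2)
    (integrable_dirichletForm_integrand hσ₂ hσ₂F hF hh hFh hFh2) fun p =>
      mul_le_mul_of_nonneg_right (mul_le_mul_of_nonneg_right (hσ₁₂ p.1 p.2) (hF₀ p.2))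
        (sq_nonneg _)

variable [SFinite μ]

theorem dirichletForm_bgk (ν : ℝ) (hF : Integrable F μ) {h : α → ℝ}
    (hFh : Integrable (fun v => F v * h v) μ) (hFh2 : Integrable (fun v => F v * h v ^ 2) μ) :
    dirichletForm μ (fun v _ => ν * F v) F h
      = 2 * ν * ((∫ v, F v ∂μ) * (∫ v, F v * h v ^ 2 ∂μ) - (∫ v, F v * h v ∂μ) ^ 2) := by
  have h₁ : Integrable (fun p : α × α => F p.1 * (F p.2 * h p.2 ^ 2)
      - 2 * ((F p.1 * h p.1) * (F p.2 * h p.2))) (μ.prod μ) :=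
    (hF.mul_prod hFh2).sub ((hFh.mul_prod hFh).const_mul 2)
  calc dirichletForm μ (fun v _ => ν * F v) F h
      = ν * ∫ p, F p.1 * (F p.2 * h p.2 ^ 2) - 2 * ((F p.1 * h p.1) * (F p.2 * h p.2))
          + (F p.1 * h p.1 ^ 2) * F p.2 ∂μ.prod μ := by
        rw [← integral_const_mul]
        exact integral_congr_ae (ae_of_all _ fun p => by ring)
    _ = _ := by
        rw [integral_add h₁ (hFh2.mul_prod hF), integral_sub (hF.mul_prod hFh2)
          ((hFh.mul_prod hFh).const_mul 2), integral_const_mul]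
        simp only [integral_prod_mul F (fun v => F v * h v ^ 2),
          integral_prod_mul (fun v => F v * h v) (fun v => F v * h v),
          integral_prod_mul (fun v => F v * h v ^ 2) F]
        ring

theorem integral_collisionOp_mul (hσ : AEStronglyMeasurable (Function.uncurry σ) (μ.prod μ))
    (hσF : ∀ v v', |σ v v'| ≤ C * F v) (hF : Integrable F μ) {w φ : α → ℝ}
    (hφ : AEStronglyMeasurable φ μ) (hFφ : Integrable (fun v => F v * φ v) μ)
    (hw : Integrable w μ) (hwφ : Integrable (fun v => w v * φ v) μ) :
    ∫ v, collisionOp μ σ w v * φ v ∂μ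
      = ∫ p, σ p.1 p.2 * (φ p.1 * w p.2) ∂μ.prod μ
        - ∫ p, σ p.1 p.2 * (w p.2 * φ p.2) ∂μ.prod μ := by
  have hgain := integrable_kernel_mul_prod hσ hσF hφ hFφ hw
  have hloss := integrable_kernel_mul_snd hσ hσF hF hwφ
  have hloss' : Integrable (fun p : α × α => σ p.2 p.1 * (w p.1 * φ p.1)) (μ.prod μ) := hloss.swap
  calc ∫ v, collisionOp μ σ w v * φ v ∂μ
      = ∫ v, ∫ v', σ v v' * (φ v * w v') - σ v' v * (w v * φ v) ∂μ ∂μ := by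
        refine integral_congr_ae (ae_of_all _ fun v => ?_)
        dsimp only [collisionOp]
        rw [← integral_mul_const]
        congr 1 with v'
        ring
    _ = ∫ p, σ p.1 p.2 * (φ p.1 * w p.2) - σ p.2 p.1 * (w p.1 * φ p.1) ∂μ.prod μ :=
        (integral_prod _ (hgain.sub hloss')).symm
    _ = _ := by
        rw [integral_sub hgain hloss']
        congr 1
        exact integral_prod_swap (fun p : α × α => σ p.1 p.2 * (w p.2 * φ p.2))

-- `L(F) = 0` says that the measure `σ(v,v') F(v') dv dv'` has equal marginals.
theorem integral_kernel_mul_fst_eq_snd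
    (hσ : AEStronglyMeasurable (Function.uncurry σ) (μ.prod μ))
    (hσF : ∀ v v', |σ v v'| ≤ C * F v) (hF : Integrable F μ) (hLF : ∀ v, collisionOp μ σ F v = 0)
    {φ : α → ℝ} (hφ : AEStronglyMeasurable φ μ) (hFφ : Integrable (fun v => F v * φ v) μ) :
    ∫ p, σ p.1 p.2 * (φ p.1 * F p.2) ∂μ.prod μ = ∫ p, σ p.1 p.2 * (F p.2 * φ p.2) ∂μ.prod μ := by
  have h := integral_collisionOp_mul hσ hσF hF hφ hFφ hF hFφ
  simp only [hLF, zero_mul, integral_zero] at h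
  linarith

theorem integral_collisionOp_mul_eq_neg_half_dirichletForm
    (hσ : AEStronglyMeasurable (Function.uncurry σ) (μ.prod μ))
    (hσF : ∀ v v', |σ v v'| ≤ C * F v) (hF : Integrable F μ) (hLF : ∀ v, collisionOp μ σ F v = 0)
    {h : α → ℝ} (hh : AEStronglyMeasurable h μ) (hFh : Integrable (fun v => F v * h v) μ)
    (hFh2 : Integrable (fun v => F v * h v ^ 2) μ) :
    ∫ v, collisionOp μ σ (fun v => F v * h v) v * h v ∂μ = -(1 / 2) * dirichletForm μ σ F h := by
  have hX := integrable_kernel_mul_prod hσ hσF hh hFh hFh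
  have hY := integrable_kernel_mul_snd hσ hσF hF hFh2
  have hh2 : AEStronglyMeasurable (fun v => h v ^ 2) μ := hh.pow 2
  have hZ := integrable_kernel_mul_prod hσ hσF hh2 hFh2 hF
  have hFhh : Integrable (fun v => F v * h v * h v) μ := hFh2.congr (ae_of_all _ fun v => by ring)
  have hloss : ∫ p, σ p.1 p.2 * (F p.2 * h p.2 * h p.2) ∂μ.prod μ
      = ∫ p, σ p.1 p.2 * (F p.2 * h p.2 ^ 2) ∂μ.prod μ :=
    integral_congr_ae (ae_of_all _ fun p => by ring)
  have hD : dirichletForm μ σ F h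
      = ∫ p, σ p.1 p.2 * (F p.2 * h p.2 ^ 2) ∂μ.prod μ
        - 2 * ∫ p, σ p.1 p.2 * (h p.1 * (F p.2 * h p.2)) ∂μ.prod μ
        + ∫ p, σ p.1 p.2 * (h p.1 ^ 2 * F p.2) ∂μ.prod μ := by
    have hYX : Integrable (fun p : α × α => σ p.1 p.2 * (F p.2 * h p.2 ^ 2)
        - 2 * (σ p.1 p.2 * (h p.1 * (F p.2 * h p.2)))) (μ.prod μ) := hY.sub (hX.const_mul 2)
    rw [← integral_const_mul, ← integral_sub hY (hX.const_mul 2), ← integral_add hYX hZ]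
    exact integral_congr_ae (ae_of_all _ fun p => by ring)
  rw [integral_collisionOp_mul hσ hσF hF hh hFh hFh hFhh, hD, hloss,
    integral_kernel_mul_fst_eq_snd hσ hσF hF hLF hh2 hFh2]
  ring

end LinearCollision

open LinearCollision

theorem spectral_gap_estimate_general
    (N : ℕ) (σ : EuclideanSpace ℝ (Fin N) → EuclideanSpace ℝ (Fin N) → ℝ)
    (hσmeas : Measurable (Function.uncurry σ))
    (F : EuclideanSpace ℝ (Fin N) → ℝ) (hFpos : ∀ v, 0 < F v)
    (hFint : Integrable F) (hFmass : ∫ v, F v = 1)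
    (ν₁ ν₂ : ℝ)
    (hσbdd : ∀ v v', ν₁ * F v ≤ σ v v' ∧ σ v v' ≤ ν₂ * F v)
    (hLF : ∀ v, (∫ v', σ v v' * F v' - σ v' v * F v) = 0)
    (f : EuclideanSpace ℝ (Fin N) → ℝ)
    (hfmeas : AEMeasurable f)
    (hfL2 : Integrable (fun v => (f v) ^ 2 / F v)) :
    (∫ v, (∫ v', σ v v' * f v' - σ v' v * f v) * (f v / F v))
      ≤ -ν₁ * ∫ v, (f v - (∫ v', f v') * F v) ^ 2 / F v := by
  set h := fun v => f v / F v
  have hFh : (fun v => F v * h v) = f := funext fun v => mul_div_cancel₀ _ (hFpos v).ne'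
  have hFh2 : (fun v => F v * h v ^ 2) = fun v => f v ^ 2 / F v :=
    funext fun v => by
      simp only [h, div_pow]
      field_simp
  have hf := integrable_of_integrable_sq_div hFint hFpos hfmeas.aestronglyMeasurable hfL2
  have hFhint : Integrable (fun v => F v * h v) := hFh ▸ hf
  have hFh2int : Integrable (fun v => F v * h v ^ 2) := hFh2 ▸ hfL2
  have hh : AEStronglyMeasurable h := (hfmeas.div hFint.1.aemeasurable).aestronglyMeasurable
  have hσF : ∀ v v', |σ v v'| ≤ (|ν₁| + |ν₂|) * F v := fun v v' => by
    have := hFpos v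
    obtain ⟨h₁, h₂⟩ := hσbdd v v'
    refine abs_le.2 ⟨?_, ?_⟩ <;>
      nlinarith [neg_abs_le ν₁, le_abs_self ν₂, abs_nonneg ν₁, abs_nonneg ν₂]
  have hν₁F : ∀ v (_ : EuclideanSpace ℝ (Fin N)), |ν₁ * F v| ≤ |ν₁| * F v := fun v _ => by
    rw [abs_mul, abs_of_pos (hFpos v)]
  calc (∫ v, (∫ v', σ v v' * f v' - σ v' v * f v) * (f v / F v))
      = ∫ v, collisionOp volume σ (fun v => F v * h v) v * h v := by rw [hFh]; rfl
    _ = -(1 / 2) * dirichletForm volume σ F h :=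
        integral_collisionOp_mul_eq_neg_half_dirichletForm hσmeas.aestronglyMeasurable hσF hFint
          hLF hh hFhint hFh2int
    _ ≤ -(1 / 2) * dirichletForm volume (fun v _ => ν₁ * F v) F h := by
        refine mul_le_mul_of_nonpos_left ?_ (by norm_num)
        exact dirichletForm_mono (hFint.1.comp_fst.const_mul ν₁) hν₁F hσmeas.aestronglyMeasurable
          hσF (fun v v' => (hσbdd v v').1) (fun v => (hFpos v).le) hFint hh hFhint
          hFh2int
    _ = -ν₁ * ((∫ v, f v ^ 2 / F v) - (∫ v, f v) ^ 2) := by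
        rw [dirichletForm_bgk ν₁ hFint hFhint hFh2int, hFmass, hFh, hFh2]
        ring
    _ = -ν₁ * ∫ v, (f v - (∫ v', f v') * F v) ^ 2 / F v := by
        rw [integral_sq_sub_integral_mul_div hFint (fun v => (hFpos v).ne') hFmass hf hfL2]

theorem spectral_gap_estimate
    (N : ℕ) (σ : EuclideanSpace ℝ (Fin N) → EuclideanSpace ℝ (Fin N) → ℝ)
    (hσmeas : Measurable (Function.uncurry σ))
    (F : EuclideanSpace ℝ (Fin N) → ℝ) (hFpos : ∀ v, 0 < F v)
    (hFint : Integrable F) (hFmass : ∫ v, F v = 1)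
    (ν₁ ν₂ : ℝ) (hν₁ : 0 < ν₁) (hν₁₂ : ν₁ ≤ ν₂)
    (hσbdd : ∀ v v', ν₁ * F v ≤ σ v v' ∧ σ v v' ≤ ν₂ * F v)
    (hLF : ∀ v, (∫ v', σ v v' * F v' - σ v' v * F v) = 0)
    (f : EuclideanSpace ℝ (Fin N) → ℝ)
    (hfmeas : AEMeasurable f)
    (hfL2 : Integrable (fun v => (f v) ^ 2 / F v)) :
    (∫ v, (∫ v', σ v v' * f v' - σ v' v * f v) * (f v / F v))
      ≤ -ν₁ * ∫ v, (f v - (∫ v', f v') * F v) ^ 2 / F v :=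
  spectral_gap_estimate_general N σ hσmeas F hFpos hFint hFmass ν₁ ν₂ hσbdd hLF f hfmeas hfL2
end

section
/- Let ν : ℝ^N × ℝ^N → ℝ with ν₁ ≤ ν ≤ ν₂ (positive constants), ν C¹ in x with ‖D_x ν‖_∞ ≤ M. Define p^ε(x,v,z) = exp(-∫_0^z ν(x+εvs,v) ds) ν(x+εvz,v) and p⁰(x,v,z) = e^{-zν(x,v)} ν(x,v). Then there is a constant C (depending on ν₁, ν₂, M) such that |p^ε(x,v,z) - p⁰(x,v,z)| ≤ C e^{-ν₁ z} (ε|v|z + ε|v|z²) for all x, v, z, ε. -/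
open MeasureTheory Real Set Filter

/-!
Along the ray `s ↦ x + ε s v` the collision frequency moves by at most `M ε |v| s`, so the
exponents `∫₀ᶻ ν(x + ε s v, v) ds` and `z ν(x, v)` differ by at most `M ε |v| z² / 2`, and both are
at least `ν₁ z`. Splitting `p^ε - p⁰` as
`(e^{-A} - e^{-B}) ν(x + ε z v, v) + e^{-B} (ν(x + ε z v, v) - ν(x, v))` and using `|e^{-a} - e^{-b}| ≤ e^{-min a b} |a - b|` gives the bound with `C = M (1 + sup |ν|)`.
-/

theorem abs_exp_neg_sub_exp_neg_le (a b : ℝ) :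
    |exp (-a) - exp (-b)| ≤ exp (-min a b) * |a - b| := by
  wlog hab : a ≤ b generalizing a b
  · rw [abs_sub_comm, abs_sub_comm a, min_comm]
    exact this b a (le_of_not_ge hab)
  have hexp : exp (-b) = exp (-a) * exp (a - b) := by rw [← exp_add]; ring_nf
  rw [min_eq_left hab, abs_of_nonneg (sub_nonneg.2 (exp_le_exp.2 (neg_le_neg hab))),
    abs_of_nonpos (sub_nonpos.2 hab), hexp]
  nlinarith [add_one_le_exp (a - b), exp_pos (-a)]

theorem abs_sub_le_of_norm_fderiv_le {E : Type*} [NormedAddCommGroup E] [NormedSpace ℝ E]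
    {f : E → ℝ} {M : ℝ} (hf : Differentiable ℝ f) (hM : ∀ x, ‖fderiv ℝ f x‖ ≤ M) (x y : E) :
    |f y - f x| ≤ M * ‖y - x‖ :=
  convex_univ.norm_image_sub_le_of_norm_fderiv_le (fun x _ => hf x) (fun x _ => hM x)
    (mem_univ x) (mem_univ y)

section IntervalIntegral

variable {g : ℝ → ℝ} {z : ℝ}

theorem mul_le_intervalIntegral_of_le (hz : 0 ≤ z) (hg : IntervalIntegrable g volume 0 z)
    {m : ℝ} (hm : ∀ s ∈ Icc 0 z, m ≤ g s) : m * z ≤ ∫ s in 0..z, g s := by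
  simpa [mul_comm] using
    intervalIntegral.integral_mono_on hz intervalIntegrable_const hg hm

theorem abs_intervalIntegral_sub_mul_le (hz : 0 ≤ z) (hg : IntervalIntegrable g volume 0 z)
    {c L : ℝ} (hL : ∀ s ∈ Icc 0 z, |g s - c| ≤ L * s) :
    |(∫ s in 0..z, g s) - z * c| ≤ L * z ^ 2 / 2 := by
  have hsub : (∫ s in 0..z, g s) - z * c = ∫ s in 0..z, (g s - c) := by
    simp [intervalIntegral.integral_sub hg intervalIntegrable_const]
  calc |(∫ s in 0..z, g s) - z * c|
      ≤ ∫ s in 0..z, |g s - c| := hsub ▸ intervalIntegral.abs_integral_le_integral_abs hz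
    _ ≤ ∫ s in 0..z, L * s :=
        intervalIntegral.integral_mono_on hz (hg.sub intervalIntegrable_const).abs
          ((continuous_const_mul L).intervalIntegrable 0 z) hL
    _ = L * z ^ 2 / 2 := by rw [intervalIntegral.integral_const_mul, integral_id]; ring

end IntervalIntegral

theorem abs_exp_neg_intervalIntegral_mul_sub_le {g : ℝ → ℝ} {z m K L : ℝ} (hz : 0 ≤ z)
    (hg : IntervalIntegrable g volume 0 z) (hm : ∀ s ∈ Icc 0 z, m ≤ g s) (hK : |g z| ≤ K)
    (hL : ∀ s ∈ Icc 0 z, |g s - g 0| ≤ L * s) :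
    |exp (-∫ s in 0..z, g s) * g z - exp (-(z * g 0)) * g 0|
      ≤ exp (-(m * z)) * (K * (L * z ^ 2 / 2) + L * z) := by
  set A := ∫ s in 0..z, g s
  set B := z * g 0
  have hmA : m * z ≤ A := mul_le_intervalIntegral_of_le hz hg hm
  have hmB : m * z ≤ B := by nlinarith [hm 0 ⟨le_rfl, hz⟩]
  have hexpB : exp (-B) ≤ exp (-(m * z)) := exp_le_exp.2 (neg_le_neg hmB)
  have hexpAB : |exp (-A) - exp (-B)| ≤ exp (-(m * z)) * (L * z ^ 2 / 2) :=
    (abs_exp_neg_sub_exp_neg_le A B).trans <| mul_le_mul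
      (exp_le_exp.2 (neg_le_neg (le_min hmA hmB))) (abs_intervalIntegral_sub_mul_le hz hg hL)
      (abs_nonneg _) (exp_pos _).le
  have hgz : |g z - g 0| ≤ L * z := hL z ⟨hz, le_rfl⟩
  calc |exp (-A) * g z - exp (-B) * g 0|
      = |g z * (exp (-A) - exp (-B)) + exp (-B) * (g z - g 0)| := by ring_nf
    _ ≤ |g z| * |exp (-A) - exp (-B)| + exp (-B) * |g z - g 0| := by
        grw [abs_add_le, abs_mul, abs_mul, abs_of_pos (exp_pos (-B))]
    _ ≤ K * (exp (-(m * z)) * (L * z ^ 2 / 2)) + exp (-(m * z)) * (L * z) := by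
        gcongr
        exact (abs_nonneg _).trans hK
    _ = exp (-(m * z)) * (K * (L * z ^ 2 / 2) + L * z) := by ring

theorem exit_time_kernel_perturbation_estimate_general
    (N : ℕ) (ν : EuclideanSpace ℝ (Fin N) → EuclideanSpace ℝ (Fin N) → ℝ)
    (ν₁ ν₂ M : ℝ)
    (hνbdd : ∀ x v, ν₁ ≤ ν x v ∧ ν x v ≤ ν₂)
    (hνdiff : ∀ v, Differentiable ℝ (fun x => ν x v))
    (hνlip : ∀ x v, ‖fderiv ℝ (fun y => ν y v) x‖ ≤ M) :
    ∃ C : ℝ, ∀ (x v : EuclideanSpace ℝ (Fin N)) (z ε : ℝ), 0 ≤ z → 0 < ε →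
      |Real.exp (-(∫ s in (0:ℝ)..z, ν (x + (ε * s) • v) v)) * ν (x + (ε * z) • v) v
        - Real.exp (-(z * ν x v)) * ν x v|
        ≤ C * Real.exp (-(ν₁ * z)) * (ε * ‖v‖ * z + ε * ‖v‖ * z ^ 2) := by
  have hM : 0 ≤ M := (norm_nonneg _).trans (hνlip 0 0)
  obtain ⟨K, hK, hνK⟩ : ∃ K, 0 ≤ K ∧ ∀ y v, |ν y v| ≤ K :=
    ⟨max |ν₁| |ν₂|, (abs_nonneg _).trans (le_max_left _ _),
      fun y v => abs_le_max_abs_abs (hνbdd y v).1 (hνbdd y v).2⟩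
  refine ⟨M * (1 + K), fun x v z ε hz hε => ?_⟩
  have hray : ∀ s, 0 ≤ s → |ν (x + (ε * s) • v) v - ν x v| ≤ M * ε * ‖v‖ * s := by
    intro s hs
    have h := abs_sub_le_of_norm_fderiv_le (hνdiff v) (fun y => hνlip y v) x (x + (ε * s) • v)
    rw [add_sub_cancel_left, norm_smul, norm_of_nonneg (by positivity)] at h
    exact h.trans_eq (by ring)
  have hcont : Continuous fun s : ℝ => ν (x + (ε * s) • v) v :=
    (hνdiff v).continuous.comp (by fun_prop)
  have h := abs_exp_neg_intervalIntegral_mul_sub_le hz (hcont.intervalIntegrable 0 z)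
    (fun s _ => (hνbdd _ v).1) (hνK _ v) (fun s hs => by simpa using hray s hs.1)
  simp only [mul_zero, zero_smul, add_zero] at h
  have ha : 0 ≤ M * ε * ‖v‖ := by positivity
  calc _ ≤ exp (-(ν₁ * z)) * (K * (M * ε * ‖v‖ * z ^ 2 / 2) + M * ε * ‖v‖ * z) := h
    _ ≤ exp (-(ν₁ * z)) * (M * (1 + K) * (ε * ‖v‖ * z + ε * ‖v‖ * z ^ 2)) := by
        gcongr
        nlinarith [mul_nonneg ha hz, mul_nonneg (mul_nonneg hK ha) hz,
          mul_nonneg ha (sq_nonneg z), mul_nonneg (mul_nonneg hK ha) (sq_nonneg z)]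
    _ = _ := by ring

theorem exit_time_kernel_perturbation_estimate
    (N : ℕ) (ν : EuclideanSpace ℝ (Fin N) → EuclideanSpace ℝ (Fin N) → ℝ)
    (ν₁ ν₂ M : ℝ) (hν₁ : 0 < ν₁)
    (hνbdd : ∀ x v, ν₁ ≤ ν x v ∧ ν x v ≤ ν₂)
    (hνdiff : ∀ v, Differentiable ℝ (fun x => ν x v))
    (hνlip : ∀ x v, ‖fderiv ℝ (fun y => ν y v) x‖ ≤ M) :
    ∃ C : ℝ, ∀ (x v : EuclideanSpace ℝ (Fin N)) (z ε : ℝ), 0 ≤ z → 0 < ε →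
      |Real.exp (-(∫ s in (0:ℝ)..z, ν (x + (ε * s) • v) v)) * ν (x + (ε * z) • v) v
        - Real.exp (-(z * ν x v)) * ν x v|
        ≤ C * Real.exp (-(ν₁ * z)) * (ε * ‖v‖ * z + ε * ‖v‖ * z ^ 2) :=
  exit_time_kernel_perturbation_estimate_general N ν ν₁ ν₂ M hνbdd hνdiff hνlip
end
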